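/- arXiv:2501.19334 — 4 statements merged into one kernel-verified Lean document; each statement's English description precedes it below -/
import Mathlib

section
/- The Mills-ratio function z ↦ Φ(z)/φ(z) is strictly monotone increasing on ℝ. -/
open Real MeasureTheory Filter Topology

/-- The standard normal density φ(x) = (2π)^{-1/2} exp(-x²/2). -/
noncomputable def stdNormalPDF (x : ℝ) : ℝ :=
  (Real.sqrt (2 * Real.pi))⁻¹ * Real.exp (-x ^ 2 / 2)

/-- The standard normal CDF Φ(x) = ∫_{-∞}^x φ(u) du. -/
noncomputable def stdNormalCDF (x : ℝ) : ℝ :=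
  ∫ u in Set.Iic x, stdNormalPDF u

/-- The standard bivariate normal density with correlation ρ. -/
noncomputable def biNormalPDF (x y ρ : ℝ) : ℝ :=
  (2 * Real.pi * Real.sqrt (1 - ρ ^ 2))⁻¹ *
    Real.exp (-(x ^ 2 - 2 * ρ * x * y + y ^ 2) / (2 * (1 - ρ ^ 2)))

/-- The standard bivariate normal CDF Φ₂(a, b; ρ). -/
noncomputable def biNormalCDF (a b ρ : ℝ) : ℝ :=
  ∫ x in Set.Iic a, ∫ y in Set.Iic b, biNormalPDF x y ρ

/-- The inverse Φ⁻¹ of the standard normal CDF on (0,1). -/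
noncomputable def stdNormalCDFInv (p : ℝ) : ℝ :=
  Function.invFun stdNormalCDF p

lemma stdNormalPDF_pos (x : ℝ) : 0 < stdNormalPDF x := by
  have : 0 < Real.sqrt (2 * Real.pi) := Real.sqrt_pos.2 (by positivity)
  exact mul_pos (inv_pos.2 this) (Real.exp_pos _)

lemma stdNormalPDF_eq (x : ℝ) :
    stdNormalPDF x = (Real.sqrt (2 * Real.pi))⁻¹ * Real.exp (-(1/2) * x ^ 2) := by
  unfold stdNormalPDF; ring_nf

lemma continuous_stdNormalPDF : Continuous stdNormalPDF := by
  unfold stdNormalPDF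
  fun_prop

lemma integrable_stdNormalPDF : Integrable stdNormalPDF := by
  have h := (integrable_exp_neg_mul_sq (b := 1/2) (by norm_num)).const_mul
    (Real.sqrt (2 * Real.pi))⁻¹
  refine h.congr (ae_of_all _ fun x => ?_)
  rw [stdNormalPDF_eq]

lemma integrable_mul_stdNormalPDF : Integrable (fun u => u * stdNormalPDF u) := by
  have h := (integrable_mul_exp_neg_mul_sq (b := 1/2) (by norm_num)).const_mul
    (Real.sqrt (2 * Real.pi))⁻¹
  refine h.congr (ae_of_all _ fun x => ?_)
  simp only [stdNormalPDF_eq]; ring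

lemma hasDerivAt_stdNormalPDF (x : ℝ) :
    HasDerivAt stdNormalPDF (-x * stdNormalPDF x) x := by
  unfold stdNormalPDF
  have h1 : HasDerivAt (fun y : ℝ => -y ^ 2 / 2) (-x) x := by
    have := ((hasDerivAt_pow 2 x).neg).div_const 2
    simpa using this.congr_deriv (by ring)
  have h2 := (h1.exp).const_mul (Real.sqrt (2 * Real.pi))⁻¹
  simpa [mul_comm, mul_left_comm, mul_assoc] using h2

lemma hasDerivAt_stdNormalCDF (x : ℝ) :
    HasDerivAt stdNormalCDF (stdNormalPDF x) x := by
  have key : ∀ y : ℝ, stdNormalCDF y =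
      stdNormalCDF 0 + ∫ u in (0:ℝ)..y, stdNormalPDF u := by
    intro y
    have h := intervalIntegral.integral_Iic_sub_Iic (μ := volume) (f := stdNormalPDF)
      (a := 0) (b := y) integrable_stdNormalPDF.integrableOn
      integrable_stdNormalPDF.integrableOn
    unfold stdNormalCDF
    linarith [h]
  have h : HasDerivAt (fun y => stdNormalCDF 0 + ∫ u in (0:ℝ)..y, stdNormalPDF u)
      (stdNormalPDF x) x := by
    have := intervalIntegral.integral_hasDerivAt_right
      (f := stdNormalPDF) (a := 0) (b := x)
      (integrable_stdNormalPDF.intervalIntegrable)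
      (continuous_stdNormalPDF.stronglyMeasurableAtFilter _ _)
      continuous_stdNormalPDF.continuousAt
    exact (this.const_add (stdNormalCDF 0))
  exact h.congr_of_eventuallyEq (Filter.Eventually.of_forall fun y => (key y))

lemma integral_neg_mul_pdf (z : ℝ) :
    ∫ u in Set.Iic z, (-u) * stdNormalPDF u = stdNormalPDF z := by
  have hderiv : ∀ x ∈ Set.Iic z, HasDerivAt stdNormalPDF (-x * stdNormalPDF x) x :=
    fun x _ => hasDerivAt_stdNormalPDF x
  have htend : Tendsto stdNormalPDF atBot (𝓝 0) := by
    have habs : Tendsto (fun x : ℝ => |x|) atBot atTop := tendsto_abs_atBot_atTop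
    have hpow : Tendsto (fun y : ℝ => y ^ 2) atTop atTop :=
      tendsto_pow_atTop (by norm_num)
    have hsq : Tendsto (fun x : ℝ => x ^ 2) atBot atTop := by
      refine (hpow.comp habs).congr fun x => ?_
      simp [sq_abs]
    have hneg : Tendsto (fun x : ℝ => -x ^ 2) atBot atBot :=
      tendsto_neg_atTop_atBot.comp hsq
    have h1 : Tendsto (fun x : ℝ => -x ^ 2 / 2) atBot atBot :=
      hneg.atBot_div_const (by norm_num)
    have h2 : Tendsto (fun x : ℝ => Real.exp (-x ^ 2 / 2)) atBot (𝓝 0) :=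
      Real.tendsto_exp_atBot.comp h1
    have h3 := h2.const_mul (Real.sqrt (2 * Real.pi))⁻¹
    simp only [mul_zero] at h3
    exact h3.congr fun x => rfl
  have hint : IntegrableOn (fun x => -x * stdNormalPDF x) (Set.Iic z) :=
    (integrable_mul_stdNormalPDF.neg.congr
      (ae_of_all _ fun x => by simp only [Pi.neg_apply]; ring)).integrableOn
  have := integral_Iic_of_hasDerivAt_of_tendsto' hderiv hint htend
  simpa using this

lemma mills_pos (z : ℝ) : 0 < stdNormalPDF z + z * stdNormalCDF z := by
  have hint1 : IntegrableOn (fun u => (-u) * stdNormalPDF u) (Set.Iic z) :=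
    (integrable_mul_stdNormalPDF.neg.congr
      (ae_of_all _ fun x => by simp only [Pi.neg_apply]; ring)).integrableOn
  have hint2 : IntegrableOn (fun u => z * stdNormalPDF u) (Set.Iic z) :=
    (integrable_stdNormalPDF.const_mul z).integrableOn
  have key : stdNormalPDF z + z * stdNormalCDF z
      = ∫ u in Set.Iic z, (z - u) * stdNormalPDF u := by
    have h1 : ∫ u in Set.Iic z, (z - u) * stdNormalPDF u
        = (∫ u in Set.Iic z, (-u) * stdNormalPDF u)
          + ∫ u in Set.Iic z, z * stdNormalPDF u := by
      rw [← integral_add hint1 hint2]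
      congr 1; funext u; ring
    rw [h1, integral_neg_mul_pdf, MeasureTheory.integral_const_mul]
    rfl
  rw [key]
  have hnonneg : 0 ≤ᵐ[volume.restrict (Set.Iic z)]
      fun u => (z - u) * stdNormalPDF u := by
    refine (ae_restrict_iff' measurableSet_Iic).2 (ae_of_all _ fun u hu => ?_)
    exact mul_nonneg (by simp at hu; linarith) (stdNormalPDF_pos u).le
  have hintegrable : IntegrableOn (fun u => (z - u) * stdNormalPDF u) (Set.Iic z) := by
    have hadd : IntegrableOn
        ((fun u => (-u) * stdNormalPDF u) + fun u => z * stdNormalPDF u) (Set.Iic z) :=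
      hint1.add hint2
    refine hadd.congr_fun (fun u _ => by simp only [Pi.add_apply]; ring) measurableSet_Iic
  rw [setIntegral_pos_iff_support_of_nonneg_ae hnonneg hintegrable]
  have hsub : Set.Iio z ⊆ Function.support (fun u => (z - u) * stdNormalPDF u) ∩ Set.Iic z := by
    intro u hu
    refine ⟨?_, Set.mem_Iic.2 (le_of_lt (Set.mem_Iio.1 hu))⟩
    have : (0:ℝ) < (z - u) * stdNormalPDF u :=
      mul_pos (by simp at hu; linarith) (stdNormalPDF_pos u)
    exact Function.mem_support.2 this.ne'
  calc (0:ENNReal) < volume (Set.Iio z) := by simp [Real.volume_Iio]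
    _ ≤ _ := measure_mono hsub

/-- The Mills-ratio function z ↦ Φ(z)/φ(z) is strictly monotone
increasing on ℝ. -/
theorem millsRatio_strictMono :
    StrictMono (fun z : ℝ => stdNormalCDF z / stdNormalPDF z) := by
  apply strictMono_of_deriv_pos
  intro x
  have hφ := stdNormalPDF_pos x
  have hd : HasDerivAt (fun z : ℝ => stdNormalCDF z / stdNormalPDF z)
      ((stdNormalPDF x * stdNormalPDF x - stdNormalCDF x * (-x * stdNormalPDF x))
        / (stdNormalPDF x) ^ 2) x :=
    (hasDerivAt_stdNormalCDF x).div (hasDerivAt_stdNormalPDF x) hφ.ne'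
  rw [hd.deriv]
  apply div_pos _ (pow_pos hφ 2)
  have hm := mills_pos x
  nlinarith
end

section
/- Fix ρ ∈ (−1,1) and b ∈ ℝ. Then for every a ∈ ℝ, the function a ↦ Φ₂(a, b; ρ) has derivative φ(a) · Φ((b − ρa)/√(1−ρ²)) at a. -/
open Real MeasureTheory Filter Topology

lemma stdNormalPDF_nonneg (x : ℝ) : 0 ≤ stdNormalPDF x := by
  unfold stdNormalPDF
  positivity

lemma hasDerivAt_integral_Iic {f : ℝ → ℝ} (hc : Continuous f) (hi : Integrable f) (a : ℝ) :
    HasDerivAt (fun x => ∫ t in Set.Iic x, f t) (f a) a := by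
  have key : (fun x => ∫ t in Set.Iic x, f t)
      = fun x => (∫ t in Set.Iic a, f t) + ∫ t in a..x, f t := by
    funext x
    rw [← intervalIntegral.integral_Iic_sub_Iic hi.integrableOn hi.integrableOn]
    ring
  rw [key]
  have h2 : HasDerivAt (fun x => ∫ t in a..x, f t) (f a) a :=
    intervalIntegral.integral_hasDerivAt_right hi.intervalIntegrable
      (hc.stronglyMeasurableAtFilter _ _) hc.continuousAt
  simpa using h2.const_add (∫ t in Set.Iic a, f t)

lemma sub_int {s : ℝ} (hs : 0 < s) (c b : ℝ) :
    ∫ y in Set.Iic b, s⁻¹ * stdNormalPDF ((y - c) / s) = stdNormalCDF ((b - c) / s) := by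
  set G : ℝ → ℝ := Set.indicator (Set.Iic ((b - c) / s)) stdNormalPDF with hG
  have h1 : ∀ y : ℝ, Set.indicator (Set.Iic b) (fun y => s⁻¹ * stdNormalPDF ((y - c) / s)) y
      = s⁻¹ * G ((y - c) / s) := by
    intro y
    by_cases hy : y ≤ b
    · rw [Set.indicator_of_mem (Set.mem_Iic.mpr hy), hG,
        Set.indicator_of_mem (Set.mem_Iic.mpr (by gcongr))]
    · rw [Set.indicator_of_notMem (by simpa using hy), hG, Set.indicator_of_notMem, mul_zero]
      intro hmem
      exact hy (by have := (div_le_div_iff_of_pos_right hs).mp (Set.mem_Iic.mp hmem); linarith)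
  calc ∫ y in Set.Iic b, s⁻¹ * stdNormalPDF ((y - c) / s)
      = ∫ y, Set.indicator (Set.Iic b) (fun y => s⁻¹ * stdNormalPDF ((y - c) / s)) y := by
        rw [integral_indicator measurableSet_Iic]
    _ = ∫ y, s⁻¹ * G ((y - c) / s) := by simp_rw [h1]
    _ = s⁻¹ * ∫ y, G ((y - c) / s) := integral_const_mul _ _
    _ = s⁻¹ * ∫ y, G (y / s) := by
        rw [show (fun y : ℝ => G ((y - c) / s)) = fun y => (fun z => G (z / s)) (y - c) from rfl,
          integral_sub_right_eq_self (fun z : ℝ => G (z / s)) c]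
    _ = s⁻¹ * (|s| • ∫ y, G y) := by rw [MeasureTheory.Measure.integral_comp_div G s]
    _ = stdNormalCDF ((b - c) / s) := by
        rw [abs_of_pos hs, smul_eq_mul, ← mul_assoc, inv_mul_cancel₀ hs.ne', one_mul, hG,
          integral_indicator measurableSet_Iic]
        rfl

lemma pdf_factor {ρ : ℝ} (hρ : ρ ∈ Set.Ioo (-1 : ℝ) 1) (x y : ℝ) :
    biNormalPDF x y ρ = stdNormalPDF x *
      ((Real.sqrt (1 - ρ ^ 2))⁻¹ * stdNormalPDF ((y - ρ * x) / Real.sqrt (1 - ρ ^ 2))) := by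
  obtain ⟨h1, h2⟩ := hρ
  have hpos : (0 : ℝ) < 1 - ρ ^ 2 := by nlinarith
  set s := Real.sqrt (1 - ρ ^ 2) with hs_def
  have hs : 0 < s := Real.sqrt_pos.mpr hpos
  have hs2 : s ^ 2 = 1 - ρ ^ 2 := Real.sq_sqrt hpos.le
  have h2π : Real.sqrt (2 * Real.pi) * Real.sqrt (2 * Real.pi) = 2 * Real.pi :=
    Real.mul_self_sqrt (by positivity)
  have hexp : Real.exp (-x ^ 2 / 2) * Real.exp (-((y - ρ * x) / s) ^ 2 / 2)
      = Real.exp (-(x ^ 2 - 2 * ρ * x * y + y ^ 2) / (2 * (1 - ρ ^ 2))) := by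
    rw [← Real.exp_add]
    congr 1
    rw [div_pow, hs2]
    field_simp
    ring
  have hQ : (Real.sqrt (2 * Real.pi))⁻¹ * (Real.sqrt (2 * Real.pi))⁻¹ = (2 * Real.pi)⁻¹ := by
    rw [← mul_inv, h2π]
  have hc : (2 * Real.pi * s)⁻¹
      = (Real.sqrt (2 * Real.pi))⁻¹ * (s⁻¹ * (Real.sqrt (2 * Real.pi))⁻¹) := by
    rw [mul_comm s⁻¹, ← mul_assoc, hQ, ← mul_inv]
  unfold biNormalPDF stdNormalPDF
  rw [← hexp, hc]
  ring

/-- Fix ρ ∈ (−1,1) and b ∈ ℝ. Then for every a ∈ ℝ, the function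
a ↦ Φ₂(a, b; ρ) has derivative φ(a) · Φ((b − ρa)/√(1−ρ²)) at a. -/
theorem hasDerivAt_biNormalCDF_fst (ρ b : ℝ) (hρ : ρ ∈ Set.Ioo (-1 : ℝ) 1) (a : ℝ) :
    HasDerivAt (fun a' : ℝ => biNormalCDF a' b ρ)
      (stdNormalPDF a * stdNormalCDF ((b - ρ * a) / Real.sqrt (1 - ρ ^ 2))) a := by
  have hpos : (0 : ℝ) < 1 - ρ ^ 2 := by obtain ⟨h1, h2⟩ := hρ; nlinarith
  set s := Real.sqrt (1 - ρ ^ 2) with hs_def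
  have hs : 0 < s := Real.sqrt_pos.mpr hpos
  have hF : ∀ x : ℝ, (∫ y in Set.Iic b, biNormalPDF x y ρ)
      = stdNormalPDF x * stdNormalCDF ((b - ρ * x) / s) := by
    intro x
    simp_rw [pdf_factor hρ x]
    rw [integral_const_mul, sub_int hs (ρ * x) b]
  have hfun : (fun a' : ℝ => biNormalCDF a' b ρ)
      = fun a' : ℝ => ∫ x in Set.Iic a', stdNormalPDF x * stdNormalCDF ((b - ρ * x) / s) := by
    funext a'
    unfold biNormalCDF
    simp_rw [hF]
  have hΦder : ∀ t : ℝ, HasDerivAt stdNormalCDF (stdNormalPDF t) t := fun t =>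
    hasDerivAt_integral_Iic continuous_stdNormalPDF integrable_stdNormalPDF t
  have hΦcont : Continuous stdNormalCDF :=
    continuous_iff_continuousAt.mpr fun t => (hΦder t).continuousAt
  have hΦnn : ∀ t : ℝ, 0 ≤ stdNormalCDF t := fun t =>
    setIntegral_nonneg measurableSet_Iic fun y _ => stdNormalPDF_nonneg y
  set M : ℝ := ∫ y : ℝ, stdNormalPDF y with hM_def
  have hM : 0 ≤ M := integral_nonneg stdNormalPDF_nonneg
  have hΦle : ∀ t : ℝ, stdNormalCDF t ≤ M := fun t =>
    setIntegral_le_integral integrable_stdNormalPDF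
      (Filter.Eventually.of_forall fun y => stdNormalPDF_nonneg y)
  have hFcont : Continuous (fun x : ℝ => stdNormalPDF x * stdNormalCDF ((b - ρ * x) / s)) :=
    continuous_stdNormalPDF.mul (hΦcont.comp (by fun_prop))
  have hFint : Integrable (fun x : ℝ => stdNormalPDF x * stdNormalCDF ((b - ρ * x) / s)) := by
    apply (integrable_stdNormalPDF.const_mul M).mono hFcont.aestronglyMeasurable
    filter_upwards with x
    rw [Real.norm_eq_abs, Real.norm_eq_abs,
      abs_of_nonneg (mul_nonneg (stdNormalPDF_nonneg x) (hΦnn _)),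
      abs_of_nonneg (mul_nonneg hM (stdNormalPDF_nonneg x))]
    nlinarith [hΦle ((b - ρ * x) / s), stdNormalPDF_nonneg x]
  rw [hfun]
  exact hasDerivAt_integral_Iic hFcont hFint a
end

section
/- Fix a, b ∈ ℝ. Then for every ρ ∈ (−1,1), the function ρ ↦ Φ₂(a, b; ρ) has derivative φ₂(a, b; ρ) at ρ. -/
open Real MeasureTheory Filter Topology

lemma one_sub_sq_pos' {ρ : ℝ} (h : ρ ∈ Set.Ioo (-1:ℝ) 1) : 0 < 1 - ρ^2 := by
  nlinarith [h.1, h.2]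

-- derivative in y
lemma hasDerivAt_biNormalPDF_y (x ρ : ℝ) (h : ρ ∈ Set.Ioo (-1:ℝ) 1) (y : ℝ) :
    HasDerivAt (fun y => biNormalPDF x y ρ)
      (biNormalPDF x y ρ * ((ρ * x - y) / (1 - ρ ^ 2))) y := by
  have ht := one_sub_sq_pos' h
  have hQ : HasDerivAt (fun y : ℝ => x ^ 2 - 2 * ρ * x * y + y ^ 2)
      (2 * y - 2 * ρ * x) y := by
    have hh := (((hasDerivAt_id y).const_mul (2 * ρ * x)).const_sub (x ^ 2)).add
      (hasDerivAt_pow 2 y)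
    simp only [id] at hh
    refine hh.congr_deriv ?_
    push_cast; ring
  have hE : HasDerivAt (fun y : ℝ => -(x ^ 2 - 2 * ρ * x * y + y ^ 2) / (2 * (1 - ρ ^ 2)))
      ((ρ * x - y) / (1 - ρ ^ 2)) y := by
    have hh := (hQ.neg).div_const (2 * (1 - ρ ^ 2))
    refine hh.congr_deriv ?_
    field_simp
    ring
  have := (hE.exp).const_mul ((2 * Real.pi * Real.sqrt (1 - ρ ^ 2))⁻¹)
  refine this.congr_deriv ?_
  unfold biNormalPDF
  ring

noncomputable def biNormalD (x y ρ : ℝ) : ℝ :=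
  biNormalPDF x y ρ * (((ρ * y - x) * (ρ * x - y) + ρ * (1 - ρ ^ 2)) / (1 - ρ ^ 2) ^ 2)

lemma hasDerivAt_biNormalPDF_rho (x y ρ : ℝ) (h : ρ ∈ Set.Ioo (-1:ℝ) 1) :
    HasDerivAt (fun r => biNormalPDF x y r) (biNormalD x y ρ) ρ := by
  have ht := one_sub_sq_pos' h
  set s := Real.sqrt (1 - ρ ^ 2) with hs_def
  have hs : 0 < s := Real.sqrt_pos.mpr ht
  have hs2 : s ^ 2 = 1 - ρ ^ 2 := Real.sq_sqrt ht.le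
  have h1 : HasDerivAt (fun r : ℝ => 1 - r ^ 2) (-(2 * ρ)) ρ := by
    have hh := (hasDerivAt_pow 2 ρ).const_sub 1
    refine hh.congr_deriv ?_; push_cast; ring
  have hsq : HasDerivAt (fun r : ℝ => Real.sqrt (1 - r ^ 2)) (-(2 * ρ) / (2 * s)) ρ :=
    h1.sqrt (by positivity)
  have hcm : HasDerivAt (fun r : ℝ => 2 * Real.pi * Real.sqrt (1 - r ^ 2))
      (2 * Real.pi * (-(2 * ρ) / (2 * s))) ρ := hsq.const_mul _
  have hc : HasDerivAt (fun r : ℝ => (2 * Real.pi * Real.sqrt (1 - r ^ 2))⁻¹)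
      (-(2 * Real.pi * (-(2 * ρ) / (2 * s))) / (2 * Real.pi * s) ^ 2) ρ :=
    hcm.inv (by positivity)
  have hN : HasDerivAt (fun r : ℝ => -(x ^ 2 - 2 * r * x * y + y ^ 2)) (2 * x * y) ρ := by
    have hh := ((((hasDerivAt_id ρ).const_mul 2).mul_const x).mul_const y).const_sub (x ^ 2)
    have hh2 := (hh.add_const (y ^ 2)).neg
    simp only [id_eq] at hh2
    refine hh2.congr_deriv ?_
    ring
  have hD : HasDerivAt (fun r : ℝ => 2 * (1 - r ^ 2)) (2 * -(2 * ρ)) ρ := h1.const_mul 2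
  have hE : HasDerivAt (fun r : ℝ => -(x ^ 2 - 2 * r * x * y + y ^ 2) / (2 * (1 - r ^ 2)))
      ((2 * x * y * (2 * (1 - ρ ^ 2)) - -(x ^ 2 - 2 * ρ * x * y + y ^ 2) * (2 * -(2 * ρ))) /
        (2 * (1 - ρ ^ 2)) ^ 2) ρ := hN.div hD (by positivity)
  have hfull := hc.mul hE.exp
  have : HasDerivAt (fun r => biNormalPDF x y r) _ ρ := hfull
  have hπ : Real.pi ≠ 0 := Real.pi_ne_zero
  have hs0 : s ≠ 0 := hs.ne'
  have ht0 : (1 - ρ ^ 2) ≠ 0 := ht.ne'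
  have hA : -(2 * Real.pi * (-(2 * ρ) / (2 * s))) / (2 * Real.pi * s) ^ 2
      = (2 * Real.pi * s)⁻¹ * (ρ / s ^ 2) := by
    field_simp
  rw [hA, hs2] at this
  refine this.congr_deriv ?_
  unfold biNormalD biNormalPDF
  rw [← hs_def]
  field_simp
  ring

-- bound: domination in y, uniform in x and r
lemma biNormalPDF_le_y {τ : ℝ} (x y r : ℝ) (hτ : 0 < τ) (htr : τ ≤ 1 - r ^ 2) :
    biNormalPDF x y r ≤ (2 * Real.pi * Real.sqrt τ)⁻¹ * Real.exp (-(y ^ 2) / 2) := by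
  have ht : 0 < 1 - r ^ 2 := lt_of_lt_of_le hτ htr
  have hπ := Real.pi_pos
  have h1 : Real.exp (-(x ^ 2 - 2 * r * x * y + y ^ 2) / (2 * (1 - r ^ 2)))
      ≤ Real.exp (-(y ^ 2) / 2) := by
    apply Real.exp_le_exp.mpr
    rw [div_le_div_iff₀ (by positivity) (by norm_num : (0:ℝ) < 2)]
    nlinarith [sq_nonneg (x - r * y), sq_nonneg y]
  have h2 : (2 * Real.pi * Real.sqrt (1 - r ^ 2))⁻¹ ≤ (2 * Real.pi * Real.sqrt τ)⁻¹ := by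
    apply inv_anti₀ (by positivity)
    have := Real.sqrt_le_sqrt htr
    nlinarith [Real.sqrt_pos.mpr hτ]
  unfold biNormalPDF
  exact mul_le_mul h2 h1 (Real.exp_pos _).le (by positivity)

-- bound: decay in x, fixed y, uniform in r
lemma biNormalPDF_le_x {τ : ℝ} (x y r : ℝ) (hτ : 0 < τ) (htr : τ ≤ 1 - r ^ 2) :
    biNormalPDF x y r ≤ (2 * Real.pi * Real.sqrt τ)⁻¹ * Real.exp (y ^ 2 / 2 - x ^ 2 / 4) := by
  have ht : 0 < 1 - r ^ 2 := lt_of_lt_of_le hτ htr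
  have hπ := Real.pi_pos
  have h1 : Real.exp (-(x ^ 2 - 2 * r * x * y + y ^ 2) / (2 * (1 - r ^ 2)))
      ≤ Real.exp (y ^ 2 / 2 - x ^ 2 / 4) := by
    apply Real.exp_le_exp.mpr
    rw [div_le_iff₀ (by positivity)]
    nlinarith [sq_nonneg ((1 + r ^ 2) * x - 2 * r * y),
      mul_nonneg (mul_nonneg ht.le (by positivity : (0:ℝ) ≤ 2 + r ^ 2)) (sq_nonneg y),
      sq_nonneg r, sq_nonneg x, sq_nonneg y]
  have h2 : (2 * Real.pi * Real.sqrt (1 - r ^ 2))⁻¹ ≤ (2 * Real.pi * Real.sqrt τ)⁻¹ := by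
    apply inv_anti₀ (by positivity)
    have := Real.sqrt_le_sqrt htr
    nlinarith [Real.sqrt_pos.mpr hτ]
  unfold biNormalPDF
  exact mul_le_mul h2 h1 (Real.exp_pos _).le (by positivity)

lemma sq_add_abs_le_exp (c u : ℝ) (hc : 0 ≤ c) :
    (c + |u|) ^ 2 ≤ (2 * c ^ 2 + 8) * Real.exp (u ^ 2 / 4) := by
  have h1 : u ^ 2 / 4 ≤ Real.exp (u ^ 2 / 4) := by
    nlinarith [Real.add_one_le_exp (u ^ 2 / 4)]
  have h2 : (1:ℝ) ≤ Real.exp (u ^ 2 / 4) := Real.one_le_exp (by positivity)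
  nlinarith [sq_nonneg (c - |u|), sq_abs u, sq_nonneg c]

lemma add_abs_le_exp (c u : ℝ) (hc : 0 ≤ c) :
    c + |u| ≤ (2 * c ^ 2 + 9) * Real.exp (u ^ 2 / 4) := by
  have h0 : (0:ℝ) ≤ c + |u| := by positivity
  have h1 := sq_add_abs_le_exp c u hc
  have h2 : (1:ℝ) ≤ Real.exp (u ^ 2 / 4) := Real.one_le_exp (by positivity)
  nlinarith [sq_nonneg (c + |u| - 1)]

lemma integrable_gauss_quarter (C : ℝ) :
    Integrable (fun u : ℝ => C * Real.exp (-(u ^ 2) / 4)) := by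
  have h : (fun u : ℝ => Real.exp (-(u ^ 2) / 4)) = fun u => Real.exp (-(1/4) * u ^ 2) := by
    funext u; ring_nf
  have := integrable_exp_neg_mul_sq (b := 1/4) (by norm_num)
  rw [← h] at this
  exact this.const_mul C

lemma tendsto_gauss_quarter_atBot (C : ℝ) :
    Tendsto (fun u : ℝ => C * Real.exp (-(u ^ 2) / 4)) atBot (𝓝 0) := by
  have h1 : Tendsto (fun u : ℝ => u ^ 2) atBot atTop := by
    have hp : Tendsto (fun v : ℝ => v ^ 2) atTop atTop := tendsto_pow_atTop (by norm_num)
    have := hp.comp (tendsto_abs_atBot_atTop (G := ℝ))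
    simpa only [Function.comp_def, sq_abs] using this
  have h1' : Tendsto (fun u : ℝ => -(u ^ 2)) atBot atBot := by
    simpa only [Function.comp_def] using tendsto_neg_atTop_atBot.comp h1
  have h2 : Tendsto (fun u : ℝ => -(u ^ 2) / 4) atBot atBot :=
    h1'.atBot_div_const (by norm_num)
  have h3 := (Real.tendsto_exp_atBot).comp h2
  simpa using h3.const_mul C

lemma continuous_biNormalPDF_x (y ρ : ℝ) : Continuous fun x => biNormalPDF x y ρ := by
  unfold biNormalPDF; fun_prop

lemma continuous_biNormalPDF_y' (x ρ : ℝ) : Continuous fun y => biNormalPDF x y ρ := by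
  unfold biNormalPDF; fun_prop

lemma continuous_biNormalD_y (x ρ : ℝ) : Continuous fun y => biNormalD x y ρ := by
  unfold biNormalD
  exact (continuous_biNormalPDF_y' x ρ).mul (by fun_prop)

lemma abs_biNormalD_le {τ : ℝ} (x y r : ℝ) (hτ : 0 < τ) (htr : τ ≤ 1 - r ^ 2) :
    |biNormalD x y r| ≤
      (2 * Real.pi * Real.sqrt τ)⁻¹ * ((2 * (1 + |x|) ^ 2 + 8) / τ ^ 2) *
        Real.exp (-(y ^ 2) / 4) := by
  have ht : 0 < 1 - r ^ 2 := lt_of_lt_of_le hτ htr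
  have hr : |r| ≤ 1 := by nlinarith [sq_abs r, abs_nonneg r, sq_nonneg (|r| - 1)]
  have hπ := Real.pi_pos
  have hfpos : 0 ≤ biNormalPDF x y r := by unfold biNormalPDF; positivity
  have hf := biNormalPDF_le_y x y r hτ htr
  have e1 : |r * y - x| ≤ |y| + |x| := by
    calc |r * y - x| ≤ |r * y| + |x| := abs_sub _ _
      _ = |r| * |y| + |x| := by rw [abs_mul]
      _ ≤ |y| + |x| := by nlinarith [abs_nonneg y]
  have e2 : |r * x - y| ≤ |x| + |y| := by
    calc |r * x - y| ≤ |r * x| + |y| := abs_sub _ _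
      _ = |r| * |x| + |y| := by rw [abs_mul]
      _ ≤ |x| + |y| := by nlinarith [abs_nonneg x]
  have e3 : |r * (1 - r ^ 2)| ≤ 1 := by
    rw [abs_mul, abs_of_nonneg ht.le]
    nlinarith [abs_nonneg r, sq_abs r]
  have hnum : |(r * y - x) * (r * x - y) + r * (1 - r ^ 2)| ≤ (1 + |x| + |y|) ^ 2 := by
    calc |(r * y - x) * (r * x - y) + r * (1 - r ^ 2)|
        ≤ |(r * y - x) * (r * x - y)| + |r * (1 - r ^ 2)| := abs_add_le _ _
      _ = |r * y - x| * |r * x - y| + |r * (1 - r ^ 2)| := by rw [abs_mul]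
      _ ≤ (1 + |x| + |y|) ^ 2 := by
          nlinarith [abs_nonneg (r * y - x), abs_nonneg (r * x - y), abs_nonneg x,
            abs_nonneg y, e1, e2, e3]
  have hden : τ ^ 2 ≤ (1 - r ^ 2) ^ 2 := by nlinarith
  have hsq := sq_add_abs_le_exp (1 + |x|) y (by positivity)
  have hexp : Real.exp (-(y ^ 2) / 2) * Real.exp (y ^ 2 / 4) = Real.exp (-(y ^ 2) / 4) := by
    rw [← Real.exp_add]; ring_nf
  calc |biNormalD x y r|
      = biNormalPDF x y r *
        (|(r * y - x) * (r * x - y) + r * (1 - r ^ 2)| / (1 - r ^ 2) ^ 2) := by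
        unfold biNormalD
        rw [abs_mul, abs_of_nonneg hfpos, abs_div, abs_of_nonneg (by positivity : (0:ℝ) ≤ (1 - r^2)^2)]
    _ ≤ ((2 * Real.pi * Real.sqrt τ)⁻¹ * Real.exp (-(y ^ 2) / 2)) *
        ((1 + |x| + |y|) ^ 2 / τ ^ 2) := by
        apply mul_le_mul hf (div_le_div₀ (by positivity) hnum (by positivity) hden)
          (by positivity) (by positivity)
    _ ≤ ((2 * Real.pi * Real.sqrt τ)⁻¹ * Real.exp (-(y ^ 2) / 2)) *
        ((2 * (1 + |x|) ^ 2 + 8) * Real.exp (y ^ 2 / 4) / τ ^ 2) := by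
        apply mul_le_mul_of_nonneg_left _ (by positivity)
        apply div_le_div_of_nonneg_right _ (by positivity)
        calc (1 + |x| + |y|) ^ 2 = ((1 + |x|) + |y|) ^ 2 := by ring
          _ ≤ (2 * (1 + |x|) ^ 2 + 8) * Real.exp (y ^ 2 / 4) := hsq
    _ = (2 * Real.pi * Real.sqrt τ)⁻¹ * ((2 * (1 + |x|) ^ 2 + 8) / τ ^ 2) *
        Real.exp (-(y ^ 2) / 4) := by
        rw [← hexp]; ring

lemma hasDerivAt_g (x ρ : ℝ) (h : ρ ∈ Set.Ioo (-1:ℝ) 1) (y : ℝ) :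
    HasDerivAt (fun y => biNormalPDF x y ρ * ((ρ * y - x) / (1 - ρ ^ 2)))
      (biNormalD x y ρ) y := by
  have ht := one_sub_sq_pos' h
  have hL : HasDerivAt (fun y : ℝ => (ρ * y - x) / (1 - ρ ^ 2)) (ρ / (1 - ρ ^ 2)) y := by
    have hh := (((hasDerivAt_id y).const_mul ρ).sub_const x).div_const (1 - ρ ^ 2)
    simp only [id_eq] at hh
    refine hh.congr_deriv ?_
    ring
  have hm := (hasDerivAt_biNormalPDF_y x ρ h y).mul hL
  refine hm.congr_deriv ?_
  unfold biNormalD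
  field_simp

lemma integrable_gauss (C k : ℝ) (hk : 0 < k) :
    Integrable (fun u : ℝ => C * Real.exp (-(u ^ 2) / k)) := by
  have h : (fun u : ℝ => Real.exp (-(u ^ 2) / k)) = fun u => Real.exp (-(1/k) * u ^ 2) := by
    funext u; ring_nf
  have := integrable_exp_neg_mul_sq (b := 1/k) (by positivity)
  rw [← h] at this
  exact this.const_mul C

lemma ball_params (ρ' : ℝ) (h : ρ' ∈ Set.Ioo (-1:ℝ) 1) :
    ∃ ε τ, 0 < ε ∧ 0 < τ ∧ ∀ r ∈ Metric.ball ρ' ε, τ ≤ 1 - r ^ 2 ∧ r ∈ Set.Ioo (-1:ℝ) 1 := by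
  have hρ : |ρ'| < 1 := abs_lt.mpr ⟨h.1, h.2⟩
  have habs := abs_nonneg ρ'
  refine ⟨(1 - |ρ'|)/2, 1 - ((1 + |ρ'|)/2)^2, by linarith, by nlinarith, ?_⟩
  intro r hr
  rw [Metric.mem_ball, Real.dist_eq] at hr
  have h1 : |r| ≤ (1 + |ρ'|)/2 := by
    have h2 := abs_sub_abs_le_abs_sub r ρ'
    linarith
  have h3 := abs_nonneg r
  have h4 := neg_abs_le r
  have h5 := le_abs_self r
  refine ⟨by nlinarith [sq_abs r], by constructor <;> nlinarith⟩

set_option maxHeartbeats 1000000 in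
lemma inner_hasDerivAt (x b ρ' : ℝ) (h : ρ' ∈ Set.Ioo (-1:ℝ) 1) :
    HasDerivAt (fun r => ∫ y in Set.Iic b, biNormalPDF x y r)
      (biNormalPDF x b ρ' * ((ρ' * b - x) / (1 - ρ' ^ 2))) ρ' := by
  obtain ⟨ε, τ, hε, hτ, hball⟩ := ball_params ρ' h
  have hτρ : τ ≤ 1 - ρ' ^ 2 := (hball ρ' (Metric.mem_ball_self hε)).1
  have ht' := one_sub_sq_pos' h
  have hπ := Real.pi_pos
  set C : ℝ := (2 * Real.pi * Real.sqrt τ)⁻¹ * ((2 * (1 + |x|) ^ 2 + 8) / τ ^ 2) with hC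
  have hFint : Integrable (fun y => biNormalPDF x y ρ') (volume.restrict (Set.Iic b)) := by
    apply ((integrable_gauss ((2 * Real.pi * Real.sqrt τ)⁻¹) 2 two_pos).restrict
      (s := Set.Iic b)).mono'
      ((continuous_biNormalPDF_y' x ρ').aestronglyMeasurable.restrict)
    refine Eventually.of_forall fun y => ?_
    rw [Real.norm_eq_abs, abs_of_nonneg (by unfold biNormalPDF; positivity)]
    exact biNormalPDF_le_y x y ρ' hτ hτρ
  have hbound : ∀ᵐ y ∂(volume.restrict (Set.Iic b)), ∀ r ∈ Metric.ball ρ' ε,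
      ‖biNormalD x y r‖ ≤ C * Real.exp (-(y ^ 2) / 4) := by
    refine Eventually.of_forall fun y r hr => ?_
    rw [Real.norm_eq_abs]
    exact abs_biNormalD_le x y r hτ (hball r hr).1
  have hdiff : ∀ᵐ y ∂(volume.restrict (Set.Iic b)), ∀ r ∈ Metric.ball ρ' ε,
      HasDerivAt (fun r => biNormalPDF x y r) (biNormalD x y r) r :=
    Eventually.of_forall fun y r hr => hasDerivAt_biNormalPDF_rho x y r (hball r hr).2
  have key := hasDerivAt_integral_of_dominated_loc_of_deriv_le
    (𝕜 := ℝ) (μ := volume.restrict (Set.Iic b))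
    (F := fun r y => biNormalPDF x y r) (F' := fun r y => biNormalD x y r)
    (x₀ := ρ') (bound := fun y => C * Real.exp (-(y ^ 2) / 4))
    (Metric.ball_mem_nhds _ hε)
    (Eventually.of_forall fun r => (continuous_biNormalPDF_y' x r).aestronglyMeasurable.restrict)
    hFint
    ((continuous_biNormalD_y x ρ').aestronglyMeasurable.restrict)
    hbound
    ((integrable_gauss C 4 (by norm_num)).restrict (s := Set.Iic b))
    hdiff
  have hd := key.2
  have hint : Integrable (fun y => biNormalD x y ρ') (volume.restrict (Set.Iic b)) := key.1
  have hρ1 : |ρ'| ≤ 1 := by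
    have := abs_lt.mpr ⟨h.1, h.2⟩; linarith
  set C₂ : ℝ := (2 * Real.pi * Real.sqrt τ)⁻¹ * ((2 * |x| ^ 2 + 9) / τ) with hC2
  have htend : Tendsto (fun y => biNormalPDF x y ρ' * ((ρ' * y - x) / (1 - ρ' ^ 2)))
      atBot (𝓝 0) := by
    apply squeeze_zero_norm (a := fun y : ℝ => C₂ * Real.exp (-(y ^ 2) / 4)) _
      (tendsto_gauss_quarter_atBot C₂)
    intro y
    rw [Real.norm_eq_abs, abs_mul, abs_of_nonneg (by unfold biNormalPDF; positivity)]
    have hL : |(ρ' * y - x) / (1 - ρ' ^ 2)| ≤ (|x| + |y|) / τ := by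
      rw [abs_div, abs_of_nonneg ht'.le]
      apply div_le_div₀ (by positivity) _ hτ hτρ
      calc |ρ' * y - x| ≤ |ρ' * y| + |x| := abs_sub _ _
        _ = |ρ'| * |y| + |x| := by rw [abs_mul]
        _ ≤ |x| + |y| := by nlinarith [abs_nonneg y]
    have hf := biNormalPDF_le_y x y ρ' hτ hτρ
    have habs := add_abs_le_exp |x| y (abs_nonneg x)
    have hexp : Real.exp (-(y ^ 2) / 2) * Real.exp (y ^ 2 / 4) = Real.exp (-(y ^ 2) / 4) := by
      rw [← Real.exp_add]; ring_nf
    calc biNormalPDF x y ρ' * |(ρ' * y - x) / (1 - ρ' ^ 2)|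
        ≤ ((2 * Real.pi * Real.sqrt τ)⁻¹ * Real.exp (-(y ^ 2) / 2)) * ((|x| + |y|) / τ) := by
          apply mul_le_mul hf hL (by positivity) (by positivity)
      _ ≤ ((2 * Real.pi * Real.sqrt τ)⁻¹ * Real.exp (-(y ^ 2) / 2)) *
          ((2 * |x| ^ 2 + 9) * Real.exp (y ^ 2 / 4) / τ) := by
          apply mul_le_mul_of_nonneg_left _ (by positivity)
          exact div_le_div_of_nonneg_right habs hτ.le
      _ = C₂ * Real.exp (-(y ^ 2) / 4) := by rw [hC2, ← hexp]; ring
  have hval : ∫ y in Set.Iic b, biNormalD x y ρ'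
      = biNormalPDF x b ρ' * ((ρ' * b - x) / (1 - ρ' ^ 2)) - 0 :=
    MeasureTheory.integral_Iic_of_hasDerivAt_of_tendsto'
      (fun y _ => hasDerivAt_g x ρ' h y) hint htend
  rw [hval, sub_zero] at hd
  exact hd

lemma add_abs_le_exp8 (c u : ℝ) (hc : 0 ≤ c) :
    c + |u| ≤ (2 * c ^ 2 + 17) * Real.exp (u ^ 2 / 8) := by
  have h1 : u ^ 2 / 8 ≤ Real.exp (u ^ 2 / 8) := by
    nlinarith [Real.add_one_le_exp (u ^ 2 / 8)]
  have h2 : (1:ℝ) ≤ Real.exp (u ^ 2 / 8) := Real.one_le_exp (by positivity)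
  have h0 : (0:ℝ) ≤ c + |u| := by positivity
  have hsq : (c + |u|) ^ 2 ≤ (2 * c ^ 2 + 16) * Real.exp (u ^ 2 / 8) := by
    nlinarith [sq_nonneg (c - |u|), sq_abs u, sq_nonneg c]
  nlinarith [sq_nonneg (c + |u| - 1)]

lemma tendsto_gauss_atBot (C k : ℝ) (hk : 0 < k) :
    Tendsto (fun u : ℝ => C * Real.exp (-(u ^ 2) / k)) atBot (𝓝 0) := by
  have h1 : Tendsto (fun u : ℝ => u ^ 2) atBot atTop := by
    have hp : Tendsto (fun v : ℝ => v ^ 2) atTop atTop := tendsto_pow_atTop (by norm_num)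
    have := hp.comp (tendsto_abs_atBot_atTop (G := ℝ))
    simpa only [Function.comp_def, sq_abs] using this
  have h1' : Tendsto (fun u : ℝ => -(u ^ 2)) atBot atBot := by
    simpa only [Function.comp_def] using tendsto_neg_atTop_atBot.comp h1
  have h2 : Tendsto (fun u : ℝ => -(u ^ 2) / k) atBot atBot :=
    h1'.atBot_div_const hk
  have h3 := (Real.tendsto_exp_atBot).comp h2
  simpa using h3.const_mul C

lemma abs_F'_le {τ : ℝ} (b x r : ℝ) (hτ : 0 < τ) (htr : τ ≤ 1 - r ^ 2) :
    |biNormalPDF x b r * ((r * b - x) / (1 - r ^ 2))| ≤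
      ((2 * Real.pi * Real.sqrt τ)⁻¹ * Real.exp (b ^ 2 / 2) * ((2 * b ^ 2 + 17) / τ)) *
        Real.exp (-(x ^ 2) / 8) := by
  have ht : 0 < 1 - r ^ 2 := lt_of_lt_of_le hτ htr
  have hr : |r| ≤ 1 := by nlinarith [sq_abs r, abs_nonneg r, sq_nonneg (|r| - 1)]
  have hπ := Real.pi_pos
  have hf := biNormalPDF_le_x x b r hτ htr
  have hL : |(r * b - x) / (1 - r ^ 2)| ≤ (|b| + |x|) / τ := by
    rw [abs_div, abs_of_nonneg ht.le]
    apply div_le_div₀ (by positivity) _ hτ htr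
    calc |r * b - x| ≤ |r * b| + |x| := abs_sub _ _
      _ = |r| * |b| + |x| := by rw [abs_mul]
      _ ≤ |b| + |x| := by nlinarith [abs_nonneg b]
  have habs : |b| + |x| ≤ (2 * b ^ 2 + 17) * Real.exp (x ^ 2 / 8) := by
    have := add_abs_le_exp8 |b| x (abs_nonneg b)
    rwa [sq_abs] at this
  have hexp : Real.exp (b ^ 2 / 2 - x ^ 2 / 4) * Real.exp (x ^ 2 / 8)
      = Real.exp (b ^ 2 / 2) * Real.exp (-(x ^ 2) / 8) := by
    rw [← Real.exp_add, ← Real.exp_add]; ring_nf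
  rw [abs_mul, abs_of_nonneg (by unfold biNormalPDF; positivity)]
  calc biNormalPDF x b r * |(r * b - x) / (1 - r ^ 2)|
      ≤ ((2 * Real.pi * Real.sqrt τ)⁻¹ * Real.exp (b ^ 2 / 2 - x ^ 2 / 4)) *
        ((|b| + |x|) / τ) := mul_le_mul hf hL (by positivity) (by positivity)
    _ ≤ ((2 * Real.pi * Real.sqrt τ)⁻¹ * Real.exp (b ^ 2 / 2 - x ^ 2 / 4)) *
        ((2 * b ^ 2 + 17) * Real.exp (x ^ 2 / 8) / τ) := by
        apply mul_le_mul_of_nonneg_left _ (by positivity)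
        exact div_le_div_of_nonneg_right habs hτ.le
    _ = ((2 * Real.pi * Real.sqrt τ)⁻¹ * Real.exp (b ^ 2 / 2) * ((2 * b ^ 2 + 17) / τ)) *
        Real.exp (-(x ^ 2) / 8) := by
        rw [show ((2 * Real.pi * Real.sqrt τ)⁻¹ * Real.exp (b ^ 2 / 2 - x ^ 2 / 4)) *
            ((2 * b ^ 2 + 17) * Real.exp (x ^ 2 / 8) / τ)
            = (2 * Real.pi * Real.sqrt τ)⁻¹ * ((2 * b ^ 2 + 17) / τ) *
              (Real.exp (b ^ 2 / 2 - x ^ 2 / 4) * Real.exp (x ^ 2 / 8)) by ring, hexp]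
        ring

lemma biNormalPDF_le_prod (x y ρ : ℝ) (h : ρ ∈ Set.Ioo (-1:ℝ) 1) :
    biNormalPDF x y ρ ≤ (2 * Real.pi * Real.sqrt (1 - ρ ^ 2))⁻¹ *
      (Real.exp (-((1 - |ρ|) / (2 * (1 - ρ ^ 2)) * x ^ 2)) *
        Real.exp (-((1 - |ρ|) / (2 * (1 - ρ ^ 2)) * y ^ 2))) := by
  have ht := one_sub_sq_pos' h
  have hρ : |ρ| < 1 := abs_lt.mpr ⟨h.1, h.2⟩
  have hπ := Real.pi_pos
  unfold biNormalPDF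
  apply mul_le_mul_of_nonneg_left _ (by positivity)
  rw [← Real.exp_add]
  apply Real.exp_le_exp.mpr
  have h2 : 2 * ρ * x * y ≤ 2 * (|ρ| * |x| * |y|) := by
    calc 2 * ρ * x * y = 2 * (ρ * x * y) := by ring
      _ ≤ 2 * |ρ * x * y| := by linarith [le_abs_self (ρ * x * y)]
      _ = 2 * (|ρ| * |x| * |y|) := by rw [abs_mul, abs_mul]
  have key : (1 - |ρ|) * (x ^ 2 + y ^ 2) ≤ x ^ 2 - 2 * ρ * x * y + y ^ 2 := by
    nlinarith [mul_nonneg (abs_nonneg ρ) (sq_nonneg (|x| - |y|)), sq_abs x, sq_abs y]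
  have hmain : -(x ^ 2 - 2 * ρ * x * y + y ^ 2) / (2 * (1 - ρ ^ 2))
      ≤ -((1 - |ρ|) * (x ^ 2 + y ^ 2)) / (2 * (1 - ρ ^ 2)) :=
    div_le_div_of_nonneg_right (by linarith) (by positivity)
  calc -(x ^ 2 - 2 * ρ * x * y + y ^ 2) / (2 * (1 - ρ ^ 2))
      ≤ -((1 - |ρ|) * (x ^ 2 + y ^ 2)) / (2 * (1 - ρ ^ 2)) := hmain
    _ = -((1 - |ρ|) / (2 * (1 - ρ ^ 2)) * x ^ 2) + -((1 - |ρ|) / (2 * (1 - ρ ^ 2)) * y ^ 2) := by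
        ring

lemma continuous_innerInt (b r : ℝ) (hr : r ∈ Set.Ioo (-1:ℝ) 1) :
    Continuous fun x => ∫ y in Set.Iic b, biNormalPDF x y r := by
  have ht := one_sub_sq_pos' hr
  apply continuous_of_dominated (bound := fun y =>
    (2 * Real.pi * Real.sqrt (1 - r ^ 2))⁻¹ * Real.exp (-(y ^ 2) / 2))
  · exact fun x => (continuous_biNormalPDF_y' x r).aestronglyMeasurable.restrict
  · intro x
    refine Eventually.of_forall fun y => ?_
    rw [Real.norm_eq_abs, abs_of_nonneg (by unfold biNormalPDF; positivity)]
    exact biNormalPDF_le_y x y r ht le_rfl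
  · exact (integrable_gauss _ 2 two_pos).restrict
  · exact Eventually.of_forall fun y => continuous_biNormalPDF_x y r

lemma integrable_inner (a b r : ℝ) (hr : r ∈ Set.Ioo (-1:ℝ) 1) :
    Integrable (fun x => ∫ y in Set.Iic b, biNormalPDF x y r)
      (volume.restrict (Set.Iic a)) := by
  have ht := one_sub_sq_pos' hr
  have hρ : |r| < 1 := abs_lt.mpr ⟨hr.1, hr.2⟩
  have hπ := Real.pi_pos
  set c : ℝ := (1 - |r|) / (2 * (1 - r ^ 2)) with hc
  have hcpos : 0 < c := by rw [hc]; apply div_pos (by linarith) (by positivity)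
  set A : ℝ := (2 * Real.pi * Real.sqrt (1 - r ^ 2))⁻¹ with hA
  have hApos : 0 < A := by rw [hA]; positivity
  set I : ℝ := ∫ y : ℝ, Real.exp (-c * y ^ 2) with hI
  have hIint : Integrable (fun y : ℝ => Real.exp (-c * y ^ 2)) :=
    integrable_exp_neg_mul_sq hcpos
  have hInn : 0 ≤ I := integral_nonneg fun y => (Real.exp_pos _).le
  apply Integrable.mono' (g := fun x => A * I * Real.exp (-c * x ^ 2))
  · exact (((integrable_exp_neg_mul_sq hcpos).const_mul (A * I))).restrict
  · exact (continuous_innerInt b r hr).aestronglyMeasurable.restrict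
  refine Eventually.of_forall fun x => ?_
  have hfx : Integrable (fun y => biNormalPDF x y r) (volume.restrict (Set.Iic b)) := by
    apply ((integrable_gauss A 2 two_pos).restrict (s := Set.Iic b)).mono'
      ((continuous_biNormalPDF_y' x r).aestronglyMeasurable.restrict)
    refine Eventually.of_forall fun y => ?_
    rw [Real.norm_eq_abs, abs_of_nonneg (by unfold biNormalPDF; positivity)]
    exact biNormalPDF_le_y x y r ht le_rfl
  rw [Real.norm_eq_abs, abs_of_nonneg (integral_nonneg fun y => by unfold biNormalPDF; positivity)]
  calc (∫ y in Set.Iic b, biNormalPDF x y r)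
      ≤ ∫ y in Set.Iic b, A * Real.exp (-c * x ^ 2) * Real.exp (-c * y ^ 2) := by
        apply integral_mono hfx
        · exact (((integrable_exp_neg_mul_sq hcpos).const_mul
            (A * Real.exp (-c * x ^ 2)))).restrict
        · intro y
          have := biNormalPDF_le_prod x y r hr
          calc biNormalPDF x y r ≤ A * (Real.exp (-(c * x ^ 2)) * Real.exp (-(c * y ^ 2))) := this
            _ = A * Real.exp (-c * x ^ 2) * Real.exp (-c * y ^ 2) := by
                rw [neg_mul, neg_mul]; ring
    _ = A * Real.exp (-c * x ^ 2) * ∫ y in Set.Iic b, Real.exp (-c * y ^ 2) := by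
        rw [integral_const_mul]
    _ ≤ A * Real.exp (-c * x ^ 2) * I := by
        apply mul_le_mul_of_nonneg_left _ (by positivity)
        exact setIntegral_le_integral hIint (Eventually.of_forall fun y => (Real.exp_pos _).le)
    _ = A * I * Real.exp (-c * x ^ 2) := by ring

set_option maxHeartbeats 1000000 in
/-- Fix a, b ∈ ℝ. Then for every ρ ∈ (−1,1), the function
ρ ↦ Φ₂(a, b; ρ) has derivative φ₂(a, b; ρ) at ρ. -/
theorem hasDerivAt_biNormalCDF_corr (a b : ℝ) (ρ : ℝ) (hρ : ρ ∈ Set.Ioo (-1 : ℝ) 1) :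
    HasDerivAt (fun ρ' : ℝ => biNormalCDF a b ρ') (biNormalPDF a b ρ) ρ := by
  obtain ⟨ε, τ, hε, hτ, hball⟩ := ball_params ρ hρ
  have hτρ : τ ≤ 1 - ρ ^ 2 := (hball ρ (Metric.mem_ball_self hε)).1
  have ht := one_sub_sq_pos' hρ
  have hπ := Real.pi_pos
  set C₃ : ℝ := (2 * Real.pi * Real.sqrt τ)⁻¹ * Real.exp (b ^ 2 / 2) * ((2 * b ^ 2 + 17) / τ)
    with hC3
  have hF_meas : ∀ᶠ r in 𝓝 ρ, AEStronglyMeasurable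
      (fun x => ∫ y in Set.Iic b, biNormalPDF x y r) (volume.restrict (Set.Iic a)) := by
    filter_upwards [Metric.ball_mem_nhds ρ hε] with r hr
    exact (continuous_innerInt b r (hball r hr).2).aestronglyMeasurable.restrict
  have hbound : ∀ᵐ x ∂(volume.restrict (Set.Iic a)), ∀ r ∈ Metric.ball ρ ε,
      ‖biNormalPDF x b r * ((r * b - x) / (1 - r ^ 2))‖ ≤ C₃ * Real.exp (-(x ^ 2) / 8) := by
    refine Eventually.of_forall fun x r hr => ?_
    rw [Real.norm_eq_abs]
    exact abs_F'_le b x r hτ (hball r hr).1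
  have hdiff : ∀ᵐ x ∂(volume.restrict (Set.Iic a)), ∀ r ∈ Metric.ball ρ ε,
      HasDerivAt (fun r => ∫ y in Set.Iic b, biNormalPDF x y r)
        (biNormalPDF x b r * ((r * b - x) / (1 - r ^ 2))) r :=
    Eventually.of_forall fun x r hr => inner_hasDerivAt x b r (hball r hr).2
  have key := hasDerivAt_integral_of_dominated_loc_of_deriv_le
    (𝕜 := ℝ) (μ := volume.restrict (Set.Iic a))
    (F := fun r x => ∫ y in Set.Iic b, biNormalPDF x y r)
    (F' := fun r x => biNormalPDF x b r * ((r * b - x) / (1 - r ^ 2)))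
    (x₀ := ρ) (bound := fun x => C₃ * Real.exp (-(x ^ 2) / 8))
    (Metric.ball_mem_nhds _ hε) hF_meas (integrable_inner a b ρ hρ)
    (((continuous_biNormalPDF_x b ρ).mul (by fun_prop)).aestronglyMeasurable.restrict)
    hbound ((integrable_gauss C₃ 8 (by norm_num)).restrict (s := Set.Iic a)) hdiff
  have hd := key.2
  have hint : Integrable (fun x => biNormalPDF x b ρ * ((ρ * b - x) / (1 - ρ ^ 2)))
      (volume.restrict (Set.Iic a)) := key.1
  have hderivx : ∀ x ∈ Set.Iic a, HasDerivAt (fun x => biNormalPDF x b ρ)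
      (biNormalPDF x b ρ * ((ρ * b - x) / (1 - ρ ^ 2))) x := by
    intro x _
    have h1 := hasDerivAt_biNormalPDF_y b ρ hρ x
    have heq : (fun t => biNormalPDF b t ρ) = fun t => biNormalPDF t b ρ := by
      funext t; unfold biNormalPDF; ring_nf
    have heq2 : biNormalPDF b x ρ = biNormalPDF x b ρ := by unfold biNormalPDF; ring_nf
    rw [heq, heq2] at h1
    exact h1
  have htend : Tendsto (fun x => biNormalPDF x b ρ) atBot (𝓝 0) := by
    apply squeeze_zero_norm
      (a := fun x : ℝ => ((2 * Real.pi * Real.sqrt τ)⁻¹ * Real.exp (b ^ 2 / 2)) *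
        Real.exp (-(x ^ 2) / 4)) _ (tendsto_gauss_atBot _ 4 (by norm_num))
    intro x
    rw [Real.norm_eq_abs, abs_of_nonneg (by unfold biNormalPDF; positivity)]
    calc biNormalPDF x b ρ
        ≤ (2 * Real.pi * Real.sqrt τ)⁻¹ * Real.exp (b ^ 2 / 2 - x ^ 2 / 4) :=
          biNormalPDF_le_x x b ρ hτ hτρ
      _ = ((2 * Real.pi * Real.sqrt τ)⁻¹ * Real.exp (b ^ 2 / 2)) * Real.exp (-(x ^ 2) / 4) := by
          rw [show b ^ 2 / 2 - x ^ 2 / 4 = b ^ 2 / 2 + -(x ^ 2) / 4 by ring, Real.exp_add]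
          ring
  have hval : ∫ x in Set.Iic a, biNormalPDF x b ρ * ((ρ * b - x) / (1 - ρ ^ 2))
      = biNormalPDF a b ρ - 0 :=
    MeasureTheory.integral_Iic_of_hasDerivAt_of_tendsto' hderivx hint htend
  rw [hval, sub_zero] at hd
  exact hd
end

section
/- Let μ be a probability measure on ℝ, let s : ℝ → ℝ be a measurable function with 0 ≤ s(x) ≤ 1 for all x, let t ≥ 0 and α ∈ [0,1] with μ({x : s(x) ≥ t}) = α. Then for every measurable function π : ℝ → ℝ with 0 ≤ π(x) ≤ 1 for all x and ∫ π dμ ≤ α, one has ∫ π·s dμ ≤ ∫_{\{s ≥ t\}} s dμ. -/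
open Real MeasureTheory Filter Topology

/-- Let μ be a probability measure on ℝ, s : ℝ → ℝ measurable with
0 ≤ s ≤ 1, t ≥ 0 and α ∈ [0,1] with μ({x : s(x) ≥ t}) = α. Then for every
measurable π : ℝ → ℝ with 0 ≤ π ≤ 1 and ∫ π dμ ≤ α, one has
∫ π·s dμ ≤ ∫_{s ≥ t} s dμ. -/
theorem threshold_policy_optimal (μ : Measure ℝ) [IsProbabilityMeasure μ]
    (s : ℝ → ℝ) (hs : Measurable s) (hs01 : ∀ x, 0 ≤ s x ∧ s x ≤ 1)
    (t : ℝ) (ht : 0 ≤ t) (α : ℝ) (hα : α ∈ Set.Icc (0 : ℝ) 1)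
    (hthr : μ {x | s x ≥ t} = ENNReal.ofReal α)
    (pol : ℝ → ℝ) (hpol : Measurable pol) (hpol01 : ∀ x, 0 ≤ pol x ∧ pol x ≤ 1)
    (hbudget : ∫ x, pol x ∂μ ≤ α) :
    ∫ x, pol x * s x ∂μ ≤ ∫ x in {x | s x ≥ t}, s x ∂μ := by
  set A : Set ℝ := {x | s x ≥ t} with hAdef
  have hA : MeasurableSet A := measurableSet_le measurable_const hs
  have hint : ∀ (f : ℝ → ℝ), Measurable f → (∀ x, |f x| ≤ 1) → Integrable f μ := by
    intro f hf hb
    exact (integrable_const (1 : ℝ)).mono' hf.aestronglyMeasurable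
      (Filter.Eventually.of_forall (fun x => by simpa using hb x))
  have I1 : Integrable (fun x => pol x * s x) μ := by
    refine hint _ (hpol.mul hs) (fun x => ?_)
    have h1 := hpol01 x; have h2 := hs01 x
    rw [abs_le]; constructor <;> nlinarith [h1.1, h1.2, h2.1, h2.2]
  have I2 : Integrable (A.indicator s) μ := by
    refine hint _ (hs.indicator hA) (fun x => ?_)
    by_cases hx : x ∈ A
    · simp [Set.indicator_of_mem hx, abs_le]
      constructor <;> linarith [(hs01 x).1, (hs01 x).2]
    · simp [Set.indicator_of_notMem hx]
  have I3 : Integrable pol μ := by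
    refine hint _ hpol (fun x => ?_)
    rw [abs_le]; constructor <;> linarith [(hpol01 x).1, (hpol01 x).2]
  have I4 : Integrable (A.indicator (fun _ => (1:ℝ))) μ := by
    refine hint _ (measurable_const.indicator hA) (fun x => ?_)
    by_cases hx : x ∈ A <;>
      simp [Set.indicator_of_mem, Set.indicator_of_notMem, hx]
  have hpt : ∀ x, pol x * s x - A.indicator s x ≤
      t * (pol x - A.indicator (fun _ => (1:ℝ)) x) := by
    intro x
    have h1 := hpol01 x; have h2 := hs01 x
    by_cases hx : x ∈ A
    · have hts : t ≤ s x := hx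
      simp only [Set.indicator_of_mem hx]
      nlinarith [h1.1, h1.2]
    · have hts : s x ≤ t := le_of_lt (by simpa [hAdef, not_le] using hx)
      simp only [Set.indicator_of_notMem hx]
      nlinarith [h1.1, h1.2, h2.1]
  have hmono : ∫ x, (pol x * s x - A.indicator s x) ∂μ ≤
      ∫ x, t * (pol x - A.indicator (fun _ => (1:ℝ)) x) ∂μ :=
    integral_mono (I1.sub I2) ((I3.sub I4).const_mul t) hpt
  have hL : ∫ x, (pol x * s x - A.indicator s x) ∂μ =
      (∫ x, pol x * s x ∂μ) - ∫ x in A, s x ∂μ := by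
    rw [integral_sub I1 I2, integral_indicator hA]
  have hμA : (μ A).toReal = α := by
    rw [hthr, ENNReal.toReal_ofReal hα.1]
  have hR : ∫ x, t * (pol x - A.indicator (fun _ => (1:ℝ)) x) ∂μ =
      t * ((∫ x, pol x ∂μ) - α) := by
    rw [integral_const_mul, integral_sub I3 I4, integral_indicator hA]
    simp [Measure.real, hμA]
  have hfin : t * ((∫ x, pol x ∂μ) - α) ≤ 0 :=
    mul_nonpos_of_nonneg_of_nonpos ht (by linarith)
  rw [hL, hR] at hmono
  linarith
end
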